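/- Let μ be a probability measure on Ω and let T, D : Ω → (Fin p → ℝ) be random vectors whose coordinates are square-integrable. Set Σ₁₂ := Cov(T, D) and Σ₂₂ := Var(D), assume Σ₂₂ is positive definite, let W := −Σ₁₂ · Σ₂₂⁻¹, define B coordinatewise by Bᵢ := Tᵢ + ∑ⱼ Wᵢⱼ·Dⱼ, and let S := T + D. Then the p×p matrix with (i,j) entry cov(Sᵢ, Sⱼ) − cov(Bᵢ, Bⱼ) is positive semidefinite. -/

import Mathlib

open MeasureTheory Matrix

/-- Covariance of two real random variables: `cov(U, V) = E[(U − E U)(V − E V)]`. -/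
noncomputable def cov {Ω : Type*} [MeasurableSpace Ω] (μ : Measure Ω) (U V : Ω → ℝ) : ℝ :=
  ∫ ω, (U ω - ∫ ω', U ω' ∂μ) * (V ω - ∫ ω', V ω' ∂μ) ∂μ

section Aux

variable {Ω : Type*} [MeasurableSpace Ω] {μ : Measure Ω} [IsProbabilityMeasure μ]

lemma l2_integrable_mul {f g : Ω → ℝ} (hf : MemLp f 2 μ) (hg : MemLp g 2 μ) :
    Integrable (fun ω => f ω * g ω) μ := by
  have h : MemLp (f • g) 1 μ := by
    exact hg.smul hf
  exact memLp_one_iff_integrable.mp h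

lemma cov_comm (U V : Ω → ℝ) : cov μ U V = cov μ V U := by
  simp only [cov, mul_comm]

lemma integrable_center {f : Ω → ℝ} (hf : MemLp f 2 μ) :
    MemLp (fun ω => f ω - ∫ ω', f ω' ∂μ) 2 μ :=
  hf.sub (memLp_const _)

lemma cov_add_left {U U' V : Ω → ℝ} (hU : MemLp U 2 μ) (hU' : MemLp U' 2 μ)
    (hV : MemLp V 2 μ) :
    cov μ (fun ω => U ω + U' ω) V = cov μ U V + cov μ U' V := by
  have hUi : Integrable U μ := hU.integrable one_le_two
  have hU'i : Integrable U' μ := hU'.integrable one_le_two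
  have hmean : ∫ ω', (U ω' + U' ω') ∂μ = (∫ ω', U ω' ∂μ) + ∫ ω', U' ω' ∂μ :=
    integral_add hUi hU'i
  have h1 : Integrable (fun ω => (U ω - ∫ ω', U ω' ∂μ) * (V ω - ∫ ω', V ω' ∂μ)) μ :=
    l2_integrable_mul (integrable_center hU) (integrable_center hV)
  have h2 : Integrable (fun ω => (U' ω - ∫ ω', U' ω' ∂μ) * (V ω - ∫ ω', V ω' ∂μ)) μ :=
    l2_integrable_mul (integrable_center hU') (integrable_center hV)
  unfold cov
  rw [hmean]
  have : ∀ ω, (U ω + U' ω - ((∫ ω', U ω' ∂μ) + ∫ ω', U' ω' ∂μ)) * (V ω - ∫ ω', V ω' ∂μ)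
      = (U ω - ∫ ω', U ω' ∂μ) * (V ω - ∫ ω', V ω' ∂μ)
        + (U' ω - ∫ ω', U' ω' ∂μ) * (V ω - ∫ ω', V ω' ∂μ) := by
    intro ω; ring
  simp only [this]
  exact integral_add h1 h2

lemma cov_smul_left (c : ℝ) (U V : Ω → ℝ) :
    cov μ (fun ω => c * U ω) V = c * cov μ U V := by
  unfold cov
  rw [integral_const_mul,
    ← integral_const_mul c (fun ω => (U ω - ∫ ω', U ω' ∂μ) * (V ω - ∫ ω', V ω' ∂μ))]
  congr 1; funext ω; ring

lemma cov_zero_left (V : Ω → ℝ) : cov μ (fun _ => (0 : ℝ)) V = 0 := by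
  simp [cov]

lemma memℒp_sum_fun {ι : Type*} (s : Finset ι) (f : ι → Ω → ℝ)
    (hf : ∀ i ∈ s, MemLp (f i) 2 μ) : MemLp (fun ω => ∑ i ∈ s, f i ω) 2 μ := by
  have h := memLp_finset_sum' (μ := μ) s hf
  have he : (fun ω => ∑ i ∈ s, f i ω) = ∑ i ∈ s, f i := funext fun ω => by simp
  rwa [he]

lemma cov_sum_left {ι : Type*} (s : Finset ι) (f : ι → Ω → ℝ) (V : Ω → ℝ)
    (hf : ∀ i ∈ s, MemLp (f i) 2 μ) (hV : MemLp V 2 μ) :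
    cov μ (fun ω => ∑ i ∈ s, f i ω) V = ∑ i ∈ s, cov μ (f i) V := by
  classical
  induction s using Finset.induction_on with
  | empty => simpa using cov_zero_left (μ := μ) V
  | insert _ _ hnotmem ih =>
    rename_i a s'
    have hfa : MemLp (f a) 2 μ := hf a (Finset.mem_insert_self a s')
    have hfs : ∀ i ∈ s', MemLp (f i) 2 μ := fun i hi => hf i (Finset.mem_insert_of_mem hi)
    have hsum : MemLp (fun ω => ∑ i ∈ s', f i ω) 2 μ := memℒp_sum_fun s' f hfs
    have h : cov μ (fun ω => f a ω + ∑ i ∈ s', f i ω) V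
        = cov μ (f a) V + cov μ (fun ω => ∑ i ∈ s', f i ω) V :=
      cov_add_left hfa hsum hV
    simp only [Finset.sum_insert hnotmem]
    rw [h, ih hfs]

lemma cov_lincomb_left {ι : Type*} [Fintype ι] (c : ι → ℝ) (f : ι → Ω → ℝ) (V : Ω → ℝ)
    (hf : ∀ i, MemLp (f i) 2 μ) (hV : MemLp V 2 μ) :
    cov μ (fun ω => ∑ i, c i * f i ω) V = ∑ i, c i * cov μ (f i) V := by
  have h : cov μ (fun ω => ∑ i, c i * f i ω) V = ∑ i, cov μ (fun ω => c i * f i ω) V :=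
    cov_sum_left Finset.univ (fun i ω => c i * f i ω) V
      (fun i _ => (hf i).const_mul _) hV
  rw [h]
  exact Finset.sum_congr rfl fun i _ => cov_smul_left (c i) (f i) V

lemma cov_lincomb_right {ι : Type*} [Fintype ι] (c : ι → ℝ) (U : Ω → ℝ) (g : ι → Ω → ℝ)
    (hU : MemLp U 2 μ) (hg : ∀ i, MemLp (g i) 2 μ) :
    cov μ U (fun ω => ∑ i, c i * g i ω) = ∑ i, c i * cov μ U (g i) := by
  rw [cov_comm]
  rw [cov_lincomb_left c g U hg hU]
  exact Finset.sum_congr rfl fun i _ => by rw [cov_comm]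

lemma cov_lincomb_lincomb {ι κ : Type*} [Fintype ι] [Fintype κ]
    (c : ι → ℝ) (d : κ → ℝ) (f : ι → Ω → ℝ) (g : κ → Ω → ℝ)
    (hf : ∀ i, MemLp (f i) 2 μ) (hg : ∀ j, MemLp (g j) 2 μ) :
    cov μ (fun ω => ∑ i, c i * f i ω) (fun ω => ∑ j, d j * g j ω)
      = ∑ i, ∑ j, c i * d j * cov μ (f i) (g j) := by
  have hgsum : MemLp (fun ω => ∑ j, d j * g j ω) 2 μ :=
    memℒp_sum_fun Finset.univ _ (fun j _ => (hg j).const_mul (d j))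
  rw [cov_lincomb_left c f _ hf hgsum]
  refine Finset.sum_congr rfl fun i _ => ?_
  rw [cov_lincomb_right d (f i) g (hf i) hg, Finset.mul_sum]
  exact Finset.sum_congr rfl fun j _ => by ring

lemma cov_self_nonneg (U : Ω → ℝ) : 0 ≤ cov μ U U :=
  integral_nonneg fun ω => mul_self_nonneg _

end Aux

/-- Guaranteed efficiency gain over `S = T + D`: with `W = −Sig12Sig22⁻¹` and `B = T + W·D`,
the matrix `Var(S) − Var(B)` is positive semidefinite. -/
theorem guaranteed_efficiency_gain_over_sum
    {Ω : Type*} [MeasurableSpace Ω] (μ : Measure Ω) [IsProbabilityMeasure μ]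
    {p : ℕ} (T D : Ω → (Fin p → ℝ))
    (hT : ∀ i, MemLp (fun ω => T ω i) 2 μ) (hD : ∀ i, MemLp (fun ω => D ω i) 2 μ)
    (Sig12 : Matrix (Fin p) (Fin p) ℝ)
    (hSig12 : Sig12 = Matrix.of fun i j => cov μ (fun ω => T ω i) (fun ω => D ω j))
    (Sig22 : Matrix (Fin p) (Fin p) ℝ)
    (hSig22 : Sig22 = Matrix.of fun i j => cov μ (fun ω => D ω i) (fun ω => D ω j))
    (hpos : Sig22.PosDef)
    (W : Matrix (Fin p) (Fin p) ℝ) (hW : W = -(Sig12 * Sig22⁻¹))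
    (B : Fin p → Ω → ℝ) (hB : ∀ i ω, B i ω = T ω i + ∑ j, W i j * D ω j)
    (S : Ω → (Fin p → ℝ)) (hS : ∀ ω, S ω = T ω + D ω) :
    (Matrix.of fun i j =>
      cov μ (fun ω => S ω i) (fun ω => S ω j) - cov μ (B i) (B j)).PosSemidef := by
  classical
  -- invertibility and the key matrix identity
  have hdet : IsUnit Sig22.det := isUnit_iff_ne_zero.2 hpos.det_pos.ne'
  have hWS : W * Sig22 = -Sig12 := by
    rw [hW, neg_mul, Matrix.mul_assoc, Matrix.nonsing_inv_mul _ hdet, Matrix.mul_one]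
  -- L² membership
  have hB2 : ∀ i, MemLp (B i) 2 μ := by
    intro i
    have hBe : B i = fun ω => T ω i + ∑ j, W i j * D ω j := funext (hB i)
    rw [hBe]
    exact (hT i).add (memℒp_sum_fun Finset.univ _ (fun j _ => (hD j).const_mul (W i j)))
  have hS2 : ∀ i, MemLp (fun ω => S ω i) 2 μ := by
    intro i
    have hSe : (fun ω => S ω i) = fun ω => T ω i + D ω i := funext fun ω => by
      rw [hS]; rfl
    rw [hSe]; exact (hT i).add (hD i)
  -- cov(B i, D k) = 0
  have hBD : ∀ i k, cov μ (B i) (fun ω => D ω k) = 0 := by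
    intro i k
    have hBe : B i = fun ω => T ω i + ∑ j, W i j * D ω j := funext (hB i)
    have hsum : MemLp (fun ω => ∑ j, W i j * D ω j) 2 μ :=
      memℒp_sum_fun Finset.univ _ (fun j _ => (hD j).const_mul (W i j))
    have h1 : cov μ (B i) (fun ω => D ω k)
        = cov μ (fun ω => T ω i) (fun ω => D ω k)
          + cov μ (fun ω => ∑ j, W i j * D ω j) (fun ω => D ω k) := by
      rw [hBe]
      exact cov_add_left (hT i) hsum (hD k)
    have h2 : cov μ (fun ω => ∑ j, W i j * D ω j) (fun ω => D ω k)
        = ∑ j, W i j * cov μ (fun ω => D ω j) (fun ω => D ω k) :=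
      cov_lincomb_left (fun j => W i j) (fun j ω => D ω j) _ (fun j => hD j) (hD k)
    have h3 : Sig12 i k + (W * Sig22) i k = 0 := by rw [hWS]; simp
    rw [h1, h2]
    rw [hSig12, hSig22] at h3
    simpa [Matrix.mul_apply] using h3
  refine Matrix.posSemidef_iff_dotProduct_mulVec.mpr ⟨?_, ?_⟩
  · -- Hermitian
    ext i j
    simp only [Matrix.conjTranspose_apply, Matrix.of_apply, star_trivial]
    rw [cov_comm (μ := μ) (fun ω => S ω j) (fun ω => S ω i),
      cov_comm (μ := μ) (B j) (B i)]
  · intro x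
    -- linear combinations
    set m : Fin p → ℝ := fun k => x k - ∑ i, x i * W i k with hm
    set Vx : Ω → ℝ := fun ω => ∑ i, x i * B i ω with hVx
    set Zx : Ω → ℝ := fun ω => ∑ k, m k * D ω k with hZx
    have hVx2 : MemLp Vx 2 μ :=
      memℒp_sum_fun Finset.univ _ (fun i _ => (hB2 i).const_mul (x i))
    have hZx2 : MemLp Zx 2 μ :=
      memℒp_sum_fun Finset.univ _ (fun k _ => (hD k).const_mul (m k))
    -- the S-combination equals Vx + Zx
    have hUVZ : (fun ω => ∑ i, x i * S ω i) = fun ω => Vx ω + Zx ω := by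
      funext ω
      have hswap : ∑ i : Fin p, x i * ∑ j, W i j * D ω j
          = ∑ k : Fin p, (∑ i, x i * W i k) * D ω k := by
        simp only [Finset.mul_sum, Finset.sum_mul]
        rw [Finset.sum_comm]
        exact Finset.sum_congr rfl fun k _ => Finset.sum_congr rfl fun i _ => by ring
      simp only [hVx, hZx, hm, hS, hB, Pi.add_apply]
      calc ∑ i, x i * (T ω i + D ω i)
          = (∑ i, x i * T ω i) + ∑ i, x i * D ω i := by
            simp [mul_add, Finset.sum_add_distrib]
        _ = ((∑ i, x i * T ω i) + ∑ i, x i * ∑ j, W i j * D ω j)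
              + ((∑ k, x k * D ω k) - ∑ k, (∑ i, x i * W i k) * D ω k) := by
            rw [hswap]; ring
        _ = (∑ i, x i * (T ω i + ∑ j, W i j * D ω j))
              + ∑ k, (x k - ∑ i, x i * W i k) * D ω k := by
            simp [mul_add, sub_mul, Finset.sum_add_distrib, Finset.sum_sub_distrib]
    -- quadratic forms as covariances
    have hSS : cov μ (fun ω => ∑ i, x i * S ω i) (fun ω => ∑ j, x j * S ω j)
        = ∑ i, ∑ j, x i * x j * cov μ (fun ω => S ω i) (fun ω => S ω j) :=
      cov_lincomb_lincomb x x _ _ hS2 hS2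
    have hBB : cov μ Vx Vx = ∑ i, ∑ j, x i * x j * cov μ (B i) (B j) :=
      cov_lincomb_lincomb x x _ _ hB2 hB2
    -- cov(Vx, Zx) = 0
    have hVZ : cov μ Vx Zx = 0 := by
      have h := cov_lincomb_lincomb (μ := μ) x m (fun i => B i) (fun k ω => D ω k) hB2
        (fun k => hD k)
      rw [hVx, hZx, h]
      refine Finset.sum_eq_zero fun i _ => Finset.sum_eq_zero fun k _ => ?_
      rw [hBD i k]; ring
    -- expand cov(Vx+Zx, Vx+Zx)
    have hexp : cov μ (fun ω => Vx ω + Zx ω) (fun ω => Vx ω + Zx ω)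
        = cov μ Vx Vx + cov μ Zx Zx + 2 * cov μ Vx Zx := by
      have h1 : cov μ (fun ω => Vx ω + Zx ω) (fun ω => Vx ω + Zx ω)
          = cov μ Vx (fun ω => Vx ω + Zx ω) + cov μ Zx (fun ω => Vx ω + Zx ω) :=
        cov_add_left hVx2 hZx2 (hVx2.add hZx2)
      have h2 : cov μ Vx (fun ω => Vx ω + Zx ω) = cov μ Vx Vx + cov μ Vx Zx := by
        rw [cov_comm]
        rw [cov_add_left hVx2 hZx2 hVx2]
        rw [cov_comm (μ := μ) Vx Vx, cov_comm (μ := μ) Zx Vx]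
      have h3 : cov μ Zx (fun ω => Vx ω + Zx ω) = cov μ Zx Vx + cov μ Zx Zx := by
        rw [cov_comm]
        rw [cov_add_left hVx2 hZx2 hZx2]
        rw [cov_comm (μ := μ) Vx Zx, cov_comm (μ := μ) Zx Zx]
      rw [h1, h2, h3, cov_comm (μ := μ) Zx Vx]
      ring
    -- put it together
    have key : ∑ i, ∑ j, x i * x j * cov μ (fun ω => S ω i) (fun ω => S ω j)
        - ∑ i, ∑ j, x i * x j * cov μ (B i) (B j) = cov μ Zx Zx := by
      rw [← hSS, ← hBB, hUVZ, hexp, hVZ]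
      ring
    -- compute the quadratic form
    have hq : star x ⬝ᵥ ((Matrix.of fun i j =>
        cov μ (fun ω => S ω i) (fun ω => S ω j) - cov μ (B i) (B j)) *ᵥ x)
        = ∑ i, ∑ j, x i * x j * cov μ (fun ω => S ω i) (fun ω => S ω j)
          - ∑ i, ∑ j, x i * x j * cov μ (B i) (B j) := by
      simp only [dotProduct, Matrix.mulVec, dotProduct, Matrix.of_apply,
        star_trivial, Pi.star_apply]
      rw [← Finset.sum_sub_distrib]
      refine Finset.sum_congr rfl fun i _ => ?_
      rw [Finset.mul_sum, ← Finset.sum_sub_distrib]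
      refine Finset.sum_congr rfl fun j _ => ?_
      ring
    rw [hq, key]
    exact cov_self_nonneg Zx
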